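/- Let β, δ ∈ (0,1), n ∈ ℕ, D a probability distribution on Z, and P a probability distribution on H. Then with probability at least 1−δ over the i.i.d. sample S ∼ D^n, simultaneously for all probability distributions Q on H: L_D(Q) ≤ (1/β)·L̂_S(Q) + (KL(Q‖P) + log(1/δ))/(2β(1−β)·n). -/

import Mathlib

/-!
For a fixed hypothesis `h`, the loss `ℓ h z ∈ [0, 1]` satisfies `E e^{-t ℓ} ≤ 1 - p + p e^{-t}`
by convexity, and `e^{-t} ≤ 1 - t + t²/2`, so `E e^{-t ℓ} ≤ e^{(t²/2 - t) p}` with `p = L_D(h)`.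
With `t = 2(1 - β)` the exponent `t - t²/2` equals `2β(1 - β)`, hence over `n` independent
samples the exponential moment of `2β(1 - β)n (L_D(h) - L̂_S(h)/β)` is at most `1`.
Integrating over the prior `P` (Tonelli) and applying Markov's inequality, with probability
`≥ 1 - δ` the `P`-average of these exponentials is below `1/δ`; the Donsker–Varadhan change of
measure then gives `E_Q[2β(1 - β)n (L_D - L̂_S/β)] ≤ KL(Q‖P) + log(1/δ)` for every `Q` at once.
-/

open MeasureTheory Set
open scoped ENNReal NNReal

-- Kullback–Leibler divergence, valued in `ℝ≥0∞`: equal to `∫ log(dQ/dP) dQ` when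
-- `Q ≪ P` and this integral is well defined, and `∞` otherwise.
open Classical in
noncomputable def klDivE {H : Type*} [MeasurableSpace H] (Q P : Measure H) : ℝ≥0∞ :=
  if Q ≪ P ∧ Integrable (llr Q P) Q
  then ENNReal.ofReal (∫ h, llr Q P h ∂Q)
  else ⊤

/-- Risk of a Gibbs classifier `Q` under data distribution `D`. -/
noncomputable def gibbsRisk {H Z : Type*} [MeasurableSpace H] [MeasurableSpace Z]
    (ℓ : H → Z → ℝ) (D : Measure Z) (Q : Measure H) : ℝ :=
  ∫ h, ∫ z, ℓ h z ∂D ∂Q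

/-- Empirical risk of a Gibbs classifier `Q` on the sample `S`. -/
noncomputable def gibbsEmpRisk {H Z : Type*} [MeasurableSpace H]
    (ℓ : H → Z → ℝ) {n : ℕ} (S : Fin n → Z) (Q : Measure H) : ℝ :=
  ∫ h, (∑ i, ℓ h (S i)) / n ∂Q

open Real

lemma exp_neg_le_one_sub_add_sq_div_two {t : ℝ} (ht : 0 ≤ t) : exp (-t) ≤ 1 - t + t ^ 2 / 2 := by
  have hcubic : 1 + t + t ^ 2 / 2 + t ^ 3 / 6 ≤ exp t := by
    have := sum_le_exp_of_nonneg ht 4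
    simp only [Finset.sum_range_succ, Finset.sum_range_zero, Nat.factorial] at this
    norm_num at this
    linarith
  rw [exp_neg, inv_le_iff_one_le_mul₀ (exp_pos t)]
  -- the product expands to `1 + t³/6 + t⁴/12 + t⁵/12`
  calc (1 : ℝ) ≤ (1 - t + t ^ 2 / 2) * (1 + t + t ^ 2 / 2 + t ^ 3 / 6) := by
        nlinarith [pow_nonneg ht 3, pow_nonneg ht 4, pow_nonneg ht 5]
    _ ≤ (1 - t + t ^ 2 / 2) * exp t := by
        gcongr
        nlinarith [sq_nonneg (t - 1)]

lemma integral_mem_Icc_zero_one {Ω : Type*} [MeasurableSpace Ω] {μ : Measure Ω}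
    [IsProbabilityMeasure μ] {X : Ω → ℝ} (hX : AEMeasurable X μ)
    (hX01 : ∀ᵐ ω ∂μ, X ω ∈ Icc (0 : ℝ) 1) : ∫ ω, X ω ∂μ ∈ Icc (0 : ℝ) 1 :=
  ⟨integral_nonneg_of_ae (by filter_upwards [hX01] with ω hω using hω.1),
    (integral_mono_ae (Integrable.of_mem_Icc 0 1 hX hX01) (integrable_const 1)
      (by filter_upwards [hX01] with ω hω using hω.2)).trans_eq (by simp)⟩

lemma integral_exp_neg_mul_le {Ω : Type*} [MeasurableSpace Ω] {μ : Measure Ω}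
    [IsProbabilityMeasure μ] {X : Ω → ℝ} (hX : AEMeasurable X μ)
    (hX01 : ∀ᵐ ω ∂μ, X ω ∈ Icc (0 : ℝ) 1) {t : ℝ} (ht : 0 ≤ t) :
    ∫ ω, exp (-t * X ω) ∂μ ≤ exp ((t ^ 2 / 2 - t) * ∫ ω, X ω ∂μ) := by
  have hXi : Integrable X μ := Integrable.of_mem_Icc 0 1 hX hX01
  have hexp_i : Integrable (fun ω => exp (-t * X ω)) μ :=
    Integrable.of_bound (by fun_prop) 1 <| by
      filter_upwards [hX01] with ω hω
      rw [Real.norm_eq_abs, abs_of_pos (exp_pos _), exp_le_one_iff]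
      nlinarith [hω.1]
  have hchord : ∀ᵐ ω ∂μ, exp (-t * X ω) ≤ 1 + (exp (-t) - 1) * X ω := by
    filter_upwards [hX01] with ω hω
    have := convexOn_exp.2 (mem_univ 0) (mem_univ (-t)) (sub_nonneg.2 hω.2) hω.1 (by ring)
    simp only [smul_eq_mul, mul_zero, zero_add, exp_zero, mul_one] at this
    rw [mul_comm (-t)]
    linarith
  have hp0 : 0 ≤ ∫ ω, X ω ∂μ := (integral_mem_Icc_zero_one hX hX01).1
  calc ∫ ω, exp (-t * X ω) ∂μ ≤ ∫ ω, 1 + (exp (-t) - 1) * X ω ∂μ :=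
        integral_mono_ae hexp_i ((integrable_const 1).add (hXi.const_mul _)) hchord
    _ = 1 + (exp (-t) - 1) * ∫ ω, X ω ∂μ := by
        rw [integral_add (integrable_const 1) (hXi.const_mul _), integral_const_mul]; simp
    _ ≤ exp ((exp (-t) - 1) * ∫ ω, X ω ∂μ) := by
        linarith [add_one_le_exp ((exp (-t) - 1) * ∫ ω, X ω ∂μ)]
    _ ≤ exp ((t ^ 2 / 2 - t) * ∫ ω, X ω ∂μ) := by
        refine exp_le_exp.2 (mul_le_mul_of_nonneg_right ?_ hp0)
        linarith [exp_neg_le_one_sub_add_sq_div_two ht]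

lemma integral_exp_neg_mul_sum_le {Ω ι : Type*} [MeasurableSpace Ω] [Fintype ι] {μ : Measure Ω}
    [IsProbabilityMeasure μ] {X : Ω → ℝ} (hX : AEMeasurable X μ)
    (hX01 : ∀ᵐ ω ∂μ, X ω ∈ Icc (0 : ℝ) 1) {t : ℝ} (ht : 0 ≤ t) :
    ∫ ω, exp (-t * ∑ i, X (ω i)) ∂(Measure.pi fun _ : ι => μ) ≤
      exp (Fintype.card ι * ((t ^ 2 / 2 - t) * ∫ ω, X ω ∂μ)) := by
  simp_rw [Finset.mul_sum, exp_sum]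
  rw [integral_fintype_prod_eq_pow (fun ω => exp (-t * X ω)), exp_nat_mul]
  exact pow_le_pow_left₀ (integral_nonneg fun _ => (exp_pos _).le)
    (integral_exp_neg_mul_le hX hX01 ht) _

theorem integral_le_integral_llr_add_log_integral_exp {α : Type*} [MeasurableSpace α]
    {Q P : Measure α} [IsProbabilityMeasure Q] [SigmaFinite P] [NeZero P] {f : α → ℝ}
    (hQP : Q ≪ P) (hllr : Integrable (llr Q P) Q) (hfQ : Integrable f Q)
    (hfP : Integrable (fun x => exp (f x)) P) :
    ∫ x, f x ∂Q ≤ ∫ x, llr Q P x ∂Q + log (∫ x, exp (f x) ∂P) := by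
  have := isProbabilityMeasure_tilted hfP
  -- Gibbs' inequality for `Q` against the tilted prior `P.tilted f`
  have hgibbs := InformationTheory.integral_llr_add_sub_measure_univ_nonneg
    (hQP.trans (absolutelyContinuous_tilted hfP)) (integrable_llr_tilted_right hQP hfQ hllr hfP)
  rw [integral_llr_tilted_right hQP hfQ hfP hllr] at hgibbs
  simp only [probReal_univ] at hgibbs
  linarith

lemma integrable_exp_of_le {α : Type*} [MeasurableSpace α] {μ : Measure α} [IsFiniteMeasure μ]
    {f : α → ℝ} (hf : Measurable f) {C : ℝ} (hC : ∀ x, f x ≤ C) :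
    Integrable (fun x => exp (f x)) μ :=
  Integrable.of_bound (by fun_prop) (exp C) <| ae_of_all _ fun x => by
    rw [Real.norm_eq_abs, abs_of_pos (exp_pos _)]
    exact exp_le_exp.2 (hC x)

section PacBayes

variable {Ω H : Type*} [MeasurableSpace Ω] [MeasurableSpace H] {μ : Measure Ω}
  {P : Measure H} [IsProbabilityMeasure P] {F : H → Ω → ℝ}

lemma measure_lintegral_exp_ge_le [IsFiniteMeasure μ] (hF : Measurable (Function.uncurry F)) {C : ℝ}
    (hC : ∀ h ω, |F h ω| ≤ C) (hmom : ∀ h, ∫ ω, exp (F h ω) ∂μ ≤ 1) {δ : ℝ} (hδ : 0 < δ) :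
    μ {ω | ENNReal.ofReal (1 / δ) ≤ ∫⁻ h, ENNReal.ofReal (exp (F h ω)) ∂P} ≤ ENNReal.ofReal δ := by
  have hjoint : Measurable fun p : Ω × H => ENNReal.ofReal (exp (F p.2 p.1)) :=
    (hF.comp measurable_swap).exp.ennreal_ofReal
  have hmean : ∫⁻ ω, ∫⁻ h, ENNReal.ofReal (exp (F h ω)) ∂P ∂μ ≤ 1 := by
    rw [lintegral_lintegral_swap hjoint.aemeasurable]
    refine (lintegral_mono (g := fun _ => 1) fun h => ?_).trans_eq (by simp)
    rw [← ofReal_integral_eq_lintegral_ofReal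
      (integrable_exp_of_le hF.of_uncurry_left fun ω => le_of_abs_le (hC h ω))
      (ae_of_all _ fun _ => (exp_pos _).le)]
    exact ENNReal.ofReal_le_one.2 (hmom h)
  calc _ ≤ (∫⁻ ω, ∫⁻ h, ENNReal.ofReal (exp (F h ω)) ∂P ∂μ) / ENNReal.ofReal (1 / δ) :=
        meas_ge_le_lintegral_div hjoint.lintegral_prod_right'.aemeasurable (by simpa) (by simp)
    _ ≤ 1 / ENNReal.ofReal (1 / δ) := by gcongr
    _ = ENNReal.ofReal δ := by
        simp only [one_div]; rw [ENNReal.ofReal_inv_of_pos hδ, inv_inv]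

theorem one_sub_le_measure_forall_integral_le_integral_llr_add_log [IsProbabilityMeasure μ]
    (hF : Measurable (Function.uncurry F)) {C : ℝ}
    (hC : ∀ h ω, |F h ω| ≤ C) (hmom : ∀ h, ∫ ω, exp (F h ω) ∂μ ≤ 1) {δ : ℝ} (hδ : 0 < δ) :
    ENNReal.ofReal (1 - δ) ≤ μ {ω | ∀ Q : Measure H, IsProbabilityMeasure Q → Q ≪ P →
      Integrable (llr Q P) Q → ∫ h, F h ω ∂Q ≤ ∫ h, llr Q P h ∂Q + log (1 / δ)} := by
  set A : Ω → ℝ≥0∞ := fun ω => ∫⁻ h, ENNReal.ofReal (exp (F h ω)) ∂P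
  have hA : Measurable A := ((hF.comp measurable_swap).exp.ennreal_ofReal).lintegral_prod_right'
  have hgood : {ω | ENNReal.ofReal (1 / δ) ≤ A ω}ᶜ ⊆ {ω | ∀ Q : Measure H, IsProbabilityMeasure Q →
      Q ≪ P → Integrable (llr Q P) Q → ∫ h, F h ω ∂Q ≤ ∫ h, llr Q P h ∂Q + log (1 / δ)} := by
    intro ω hω Q _ hQP hllr
    have hFω : Measurable (F · ω) := hF.of_uncurry_right
    have hexp := integrable_exp_of_le (μ := P) hFω fun h => le_of_abs_le (hC h ω)
    have hAω : ∫ h, exp (F h ω) ∂P < 1 / δ := by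
      have hω : ∫⁻ h, ENNReal.ofReal (exp (F h ω)) ∂P < ENNReal.ofReal (1 / δ) := not_le.1 hω
      rwa [← ofReal_integral_eq_lintegral_ofReal hexp (ae_of_all _ fun _ => (exp_pos _).le),
        ENNReal.ofReal_lt_ofReal_iff (by positivity)] at hω
    calc ∫ h, F h ω ∂Q
        ≤ ∫ h, llr Q P h ∂Q + log (∫ h, exp (F h ω) ∂P) :=
          integral_le_integral_llr_add_log_integral_exp hQP hllr
            (Integrable.of_bound hFω.aestronglyMeasurable C (ae_of_all _ (hC · ω))) hexp
      _ ≤ ∫ h, llr Q P h ∂Q + log (1 / δ) := by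
          gcongr
          · exact integral_exp_pos hexp
  calc ENNReal.ofReal (1 - δ) = 1 - ENNReal.ofReal δ := by
        rw [ENNReal.ofReal_sub _ hδ.le, ENNReal.ofReal_one]
    _ ≤ 1 - μ {ω | ENNReal.ofReal (1 / δ) ≤ A ω} := by
        gcongr; exact measure_lintegral_exp_ge_le hF hC hmom hδ
    _ = μ {ω | ENNReal.ofReal (1 / δ) ≤ A ω}ᶜ :=
        (prob_compl_eq_one_sub (measurableSet_le measurable_const hA)).symm
    _ ≤ _ := measure_mono hgood

end PacBayes

lemma ENNReal.ofReal_le_ofReal_add_div_of_mul_sub_le {x y a b c : ℝ} (hc : 0 < c)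
    (h : c * (x - y) ≤ a + b) :
    ENNReal.ofReal x ≤
      ENNReal.ofReal y + (ENNReal.ofReal a + ENNReal.ofReal b) / ENNReal.ofReal c :=
  calc ENNReal.ofReal x ≤ ENNReal.ofReal (y + (a + b) / c) :=
        ENNReal.ofReal_le_ofReal (by rw [← sub_le_iff_le_add', le_div_iff₀' hc]; exact h)
    _ ≤ ENNReal.ofReal y + ENNReal.ofReal (a + b) / ENNReal.ofReal c := by
        rw [← ENNReal.ofReal_div_of_pos hc]; exact ENNReal.ofReal_add_le
    _ ≤ _ := by gcongr; exact ENNReal.ofReal_add_le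

section LinearDeviation

variable {Z H : Type*} [MeasurableSpace Z] [MeasurableSpace H] {ℓ : H → Z → ℝ}
  {D : Measure Z} [IsProbabilityMeasure D] {β : ℝ} {n : ℕ}

noncomputable def linearDeviation (ℓ : H → Z → ℝ) (D : Measure Z) (β : ℝ) {n : ℕ} (h : H)
    (S : Fin n → Z) : ℝ :=
  2 * β * (1 - β) * n * (∫ z, ℓ h z ∂D - 1 / β * ((∑ i, ℓ h (S i)) / n))

lemma measurable_linearDeviation (hℓmeas : Measurable (Function.uncurry ℓ)) :
    Measurable (Function.uncurry (linearDeviation ℓ D β (n := n))) := by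
  have hℓi : ∀ i, Measurable fun p : H × (Fin n → Z) => ℓ p.1 (p.2 i) := fun i =>
    hℓmeas.comp (measurable_fst.prodMk ((measurable_pi_apply i).comp measurable_snd))
  exact (((hℓmeas.stronglyMeasurable.integral_prod_right'.measurable.comp measurable_fst).sub
    (((Finset.measurable_sum _ fun i _ => hℓi i).div_const _).const_mul _)).const_mul _)

lemma sum_div_mem_Icc_zero_one {x : Fin n → ℝ} (hx : ∀ i, x i ∈ Icc (0 : ℝ) 1) :
    (∑ i, x i) / n ∈ Icc (0 : ℝ) 1 :=
  ⟨div_nonneg (Finset.sum_nonneg fun i _ => (hx i).1) n.cast_nonneg,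
    div_le_one_of_le₀ ((Finset.sum_le_sum fun i _ => (hx i).2).trans_eq (by simp))
      n.cast_nonneg⟩

lemma abs_linearDeviation_le (hℓmeas : Measurable (Function.uncurry ℓ))
    (hℓ : ∀ h z, ℓ h z ∈ Icc (0 : ℝ) 1) (h : H) (S : Fin n → Z) :
    |linearDeviation ℓ D β h S| ≤ |2 * β * (1 - β) * n| * (1 + |1 / β|) := by
  obtain ⟨hL0, hL1⟩ :=
    integral_mem_Icc_zero_one (μ := D) hℓmeas.of_uncurry_left.aemeasurable (ae_of_all _ (hℓ h))
  obtain ⟨he0, he1⟩ := sum_div_mem_Icc_zero_one fun i => hℓ h (S i)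
  rw [linearDeviation, abs_mul]
  gcongr
  calc _ ≤ |∫ z, ℓ h z ∂D| + |1 / β| * |(∑ i, ℓ h (S i)) / n| := by
        rw [← abs_mul]; exact abs_sub _ _
    _ ≤ 1 + |1 / β| * 1 := by
        gcongr
        · exact abs_le.2 ⟨by linarith, hL1⟩
        · exact abs_le.2 ⟨by linarith, he1⟩
    _ = 1 + |1 / β| := by ring

lemma integral_exp_linearDeviation_le_one (hℓmeas : Measurable (Function.uncurry ℓ))
    (hℓ : ∀ h z, ℓ h z ∈ Icc (0 : ℝ) 1) (hβ : β ∈ Ioo (0 : ℝ) 1) (hn : 0 < n) (h : H) :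
    ∫ S, exp (linearDeviation ℓ D β h S) ∂(Measure.pi fun _ : Fin n => D) ≤ 1 := by
  obtain ⟨hβ0, hβ1⟩ := hβ
  have hsplit : ∀ S : Fin n → Z, linearDeviation ℓ D β h S =
      2 * β * (1 - β) * n * ∫ z, ℓ h z ∂D + -(2 * (1 - β)) * ∑ i, ℓ h (S i) := fun S => by
    have : (n : ℝ) ≠ 0 := (Nat.cast_pos.2 hn).ne'
    rw [linearDeviation]; field_simp; ring
  simp_rw [hsplit, exp_add, integral_const_mul]
  calc exp (2 * β * (1 - β) * n * ∫ z, ℓ h z ∂D) *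
        ∫ S, exp (-(2 * (1 - β)) * ∑ i, ℓ h (S i)) ∂(Measure.pi fun _ => D)
      ≤ exp (2 * β * (1 - β) * n * ∫ z, ℓ h z ∂D) *
        exp (Fintype.card (Fin n) * (((2 * (1 - β)) ^ 2 / 2 - 2 * (1 - β)) * ∫ z, ℓ h z ∂D)) := by
        gcongr
        exact integral_exp_neg_mul_sum_le hℓmeas.of_uncurry_left.aemeasurable
          (ae_of_all _ (hℓ h)) (by linarith)
    _ = 1 := by rw [← exp_add, exp_eq_one_iff, Fintype.card_fin]; ring

lemma integral_linearDeviation (hℓmeas : Measurable (Function.uncurry ℓ))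
    (hℓ : ∀ h z, ℓ h z ∈ Icc (0 : ℝ) 1) (S : Fin n → Z) (Q : Measure H)
    [IsProbabilityMeasure Q] :
    ∫ h, linearDeviation ℓ D β h S ∂Q =
      2 * β * (1 - β) * n * (gibbsRisk ℓ D Q - 1 / β * gibbsEmpRisk ℓ S Q) := by
  have hL : Integrable (fun h => ∫ z, ℓ h z ∂D) Q := Integrable.of_mem_Icc 0 1
    hℓmeas.stronglyMeasurable.integral_prod_right'.measurable.aemeasurable
    (ae_of_all _ fun h => integral_mem_Icc_zero_one (μ := D)
      hℓmeas.of_uncurry_left.aemeasurable (ae_of_all _ (hℓ h)))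
  have hLhat : Integrable (fun h => (∑ i, ℓ h (S i)) / n) Q := Integrable.of_mem_Icc 0 1
    ((Finset.measurable_sum _ fun i _ => hℓmeas.of_uncurry_right).div_const _).aemeasurable
    (ae_of_all _ fun h => sum_div_mem_Icc_zero_one fun i => hℓ h (S i))
  simp only [linearDeviation]
  rw [integral_const_mul, integral_sub hL (hLhat.const_mul _), integral_const_mul]
  rfl

end LinearDeviation

theorem linear_pac_bayes_bound
    {Z H : Type*} [MeasurableSpace Z] [MeasurableSpace H]
    (ℓ : H → Z → ℝ) (hℓmeas : Measurable (Function.uncurry ℓ))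
    (hℓ : ∀ h z, ℓ h z ∈ Icc (0 : ℝ) 1)
    {β δ : ℝ} (hβ : β ∈ Ioo (0 : ℝ) 1) (hδ : δ ∈ Ioo (0 : ℝ) 1)
    {n : ℕ} (hn : 0 < n)
    (D : Measure Z) [IsProbabilityMeasure D]
    (P : Measure H) [IsProbabilityMeasure P] :
    ENNReal.ofReal (1 - δ) ≤
      (Measure.pi fun _ : Fin n => D)
        {S | ∀ Q : Measure H, IsProbabilityMeasure Q →
          ENNReal.ofReal (gibbsRisk ℓ D Q) ≤
            ENNReal.ofReal ((1 / β) * gibbsEmpRisk ℓ S Q) +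
              (klDivE Q P + ENNReal.ofReal (Real.log (1 / δ))) /
                ENNReal.ofReal (2 * β * (1 - β) * n)} := by
  obtain ⟨hβ0, hβ1⟩ := hβ
  have hc : 0 < 2 * β * (1 - β) * n :=
    mul_pos (mul_pos (mul_pos two_pos hβ0) (sub_pos.2 hβ1)) (Nat.cast_pos.2 hn)
  refine (one_sub_le_measure_forall_integral_le_integral_llr_add_log (P := P)
    (measurable_linearDeviation hℓmeas) (abs_linearDeviation_le hℓmeas hℓ)
    (integral_exp_linearDeviation_le_one hℓmeas hℓ ⟨hβ0, hβ1⟩ hn) hδ.1).trans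
    (measure_mono fun S hS Q hQ => ?_)
  by_cases hKL : Q ≪ P ∧ Integrable (llr Q P) Q
  · rw [klDivE, if_pos hKL]
    refine ENNReal.ofReal_le_ofReal_add_div_of_mul_sub_le hc ?_
    rw [← integral_linearDeviation hℓmeas hℓ]
    exact hS Q hQ hKL.1 hKL.2
  · rw [klDivE, if_neg hKL, top_add, ENNReal.top_div_of_ne_top ENNReal.ofReal_ne_top]
    exact le_top
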